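/- In the higher tetrahedral algebra Λ = Λ(m,λ), set X̃_2 = εηβ, X̃_4 = βεη, X̃_5 = ηβε. Then X_2 = X̃_2 + λX_2^m, X_4 = X̃_4 + λX_4^m, X_5 = X̃_5 + λX_5^m, and consequently X_2^m = (X̃_2)^m, X_4^m = (X̃_4)^m, X_5^m = (X̃_5)^m. -/

import Mathlib

open scoped TensorProduct

namespace HigherTetrahedral

/-- The twelve arrows of the tetrahedral triangulation quiver. -/
inductive Arr : Type
  | nu | de | ep | rh | si | al | ga | be | xi | et | om | mu
  deriving DecidableEq

instance : Fintype Arr :=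
  ⟨{Arr.nu, Arr.de, Arr.ep, Arr.rh, Arr.si, Arr.al, Arr.ga, Arr.be, Arr.xi, Arr.et,
    Arr.om, Arr.mu}, by intro x; cases x <;> decide⟩

open Arr

/-- Source vertex of each arrow (vertex `v` is `⟨v-1⟩ : Fin 6`). -/
def src : Arr → Fin 6
  | nu => 0 | de => 0 | ep => 1 | rh => 1 | si => 2 | al => 2
  | ga => 3 | be => 3 | xi => 4 | et => 4 | om => 5 | mu => 5

/-- Target vertex of each arrow. -/
def tgt : Arr → Fin 6
  | nu => 5 | de => 4 | ep => 4 | rh => 5 | si => 1 | al => 0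
  | ga => 0 | be => 1 | xi => 2 | et => 3 | om => 3 | mu => 2

/-- The permutation `f` of arrows, with orbits (δ η γ), (ε ξ σ), (ρ ω β), (ν μ α). -/
def f : Arr → Arr
  | de => et | et => ga | ga => de
  | ep => xi | xi => si | si => ep
  | rh => om | om => be | be => rh
  | nu => mu | mu => al | al => nu

/-- The permutation `g`: `g θ` is the arrow starting at `tgt θ` other than `f θ`. -/
def g : Arr → Arr
  | de => xi | et => be | ga => nu
  | ep => et | xi => al | si => rh
  | rh => mu | om => ga | be => ep
  | nu => om | mu => si | al => de

variable (K : Type) [Field K]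

/-- The ambient free algebra on the vertices and arrows. -/
abbrev FreeTet := FreeAlgebra K ((Fin 6) ⊕ Arr)

/-- Generator corresponding to a vertex. -/
def V (i : Fin 6) : FreeTet K := FreeAlgebra.ι K (Sum.inl i)

/-- Generator corresponding to an arrow. -/
def A (θ : Arr) : FreeTet K := FreeAlgebra.ι K (Sum.inr θ)

variable (m : ℕ) (lam : K)

/-- The defining relations of the higher tetrahedral algebra `Λ(m,λ)`, together with
the path-algebra relations for the vertex idempotents. -/
inductive TetRel : FreeTet K → FreeTet K → Prop
  | idem (i j : Fin 6) : TetRel (V K i * V K j) (if i = j then V K i else 0)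
  | sum_one : TetRel (∑ i : Fin 6, V K i) 1
  | src_tgt (θ : Arr) : TetRel (V K (src θ) * A K θ * V K (tgt θ)) (A K θ)
  | rel_ga : TetRel (A K ga * A K de)
      (A K be * A K ep + lam • ((A K be * A K rh * A K om) ^ (m - 1) * (A K be * A K ep)))
  | rel_rh : TetRel (A K rh * A K om)
      (A K ep * A K et + lam • ((A K ep * A K xi * A K si) ^ (m - 1) * (A K ep * A K et)))
  | rel_xi : TetRel (A K xi * A K si)
      (A K et * A K be + lam • ((A K et * A K ga * A K de) ^ (m - 1) * (A K et * A K be)))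
  | rel_de : TetRel (A K de * A K et) (A K nu * A K om)
  | rel_om : TetRel (A K om * A K be) (A K mu * A K si)
  | rel_si : TetRel (A K si * A K ep) (A K al * A K de)
  | rel_et : TetRel (A K et * A K ga) (A K xi * A K al)
  | rel_be : TetRel (A K be * A K rh) (A K ga * A K nu)
  | rel_ep : TetRel (A K ep * A K xi) (A K rh * A K mu)
  | rel_nu : TetRel (A K nu * A K mu) (A K de * A K xi)
  | rel_mu : TetRel (A K mu * A K al) (A K om * A K ga)
  | rel_al : TetRel (A K al * A K nu) (A K si * A K rh)
  | zero_rel (θ : Arr) : TetRel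
      ((A K θ * A K (f θ) * A K (f (f θ))) ^ (m - 1) * (A K θ * A K (f θ)) * A K (g (f θ))) 0

/-- The higher tetrahedral algebra `Λ(m,λ)`. -/
abbrev Tet := RingQuot (TetRel K m lam)

/-- The idempotent of `Λ(m,λ)` at a vertex. -/
def e (i : Fin 6) : Tet K m lam := RingQuot.mkAlgHom K (TetRel K m lam) (V K i)

/-- The image in `Λ(m,λ)` of an arrow. -/
def a (θ : Arr) : Tet K m lam := RingQuot.mkAlgHom K (TetRel K m lam) (A K θ)

/-- The elements `X_i` (vertex `i+1` in the paper's numbering):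
`X₁ = δηγ`, `X₂ = ρωβ`, `X₃ = ανμ`, `X₄ = γδη`, `X₅ = ηγδ`, `X₆ = ωβρ`. -/
def X : Fin 6 → Tet K m lam
  | 0 => a K m lam de * a K m lam et * a K m lam ga
  | 1 => a K m lam rh * a K m lam om * a K m lam be
  | 2 => a K m lam al * a K m lam nu * a K m lam mu
  | 3 => a K m lam ga * a K m lam de * a K m lam et
  | 4 => a K m lam et * a K m lam ga * a K m lam de
  | 5 => a K m lam om * a K m lam be * a K m lam rh

/-- Product in `Λ(m,λ)` of a list of arrows (a path, read left to right). -/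
def pathProd (l : List Arr) : Tet K m lam := (l.map (a K m lam)).prod

/-- `IsPath i j l` : the list of arrows `l` is a (composable) path from vertex `i`
to vertex `j`. -/
def IsPath (i j : Fin 6) (l : List Arr) : Prop :=
  l ≠ [] ∧ l.Chain' (fun x y => tgt x = src y) ∧
    (∀ h : l ≠ [], src (l.head h) = i ∧ tgt (l.getLast h) = j)

end HigherTetrahedral

/-!
Each of `X₂ = ρωβ`, `X₄ = γδη`, `X₅ = ηγδ` is a cyclic path `t` for which one deformed
relation reads `t = X̃ + λ t^(m-1) X̃`, once two commutativity relations identify the cyclic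
path in its correction term with a rotation of `t`; a zero relation and one commutativity
relation make `t^(m+1) = 0`. In any algebra these two facts, with `m ≥ 2`, turn
`λ t^(m-1) X̃` into `λ t^m` and force `X̃^m = t^m`, because `X̃ = t (1 - λ t^(m-1))` and
`t^m` is fixed by right multiplication with `1 - λ t^(m-1)`.
-/

section NilpotentPerturbation

variable {K R : Type*} [CommSemiring K] [Ring R] [Algebra K R] {m : ℕ} {lam : K} {s t : R}

/-- From `s = t - λ t^(m-1) s` one gets `t^(2m-2) s = t^(2m-1) - λ t^(3m-3) s`, and both
exponents are at least `m + 1`. -/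
theorem pow_pred_mul_eq_pow_of_eq_add_smul (hm : 2 ≤ m)
    (ht : t = s + lam • (t ^ (m - 1) * s)) (hnil : t ^ (m + 1) = 0) : t ^ (m - 1) * s = t ^ m := by
  have hs : s = t - lam • (t ^ (m - 1) * s) := eq_sub_of_add_eq ht.symm
  have hvanish : t ^ (2 * m - 2) * s = 0 := by
    rw [hs, mul_sub, mul_smul_comm, ← mul_assoc, ← pow_add, ← pow_succ,
      pow_eq_zero_of_le (by omega) hnil,
      pow_eq_zero_of_le (n := 2 * m - 2 + (m - 1)) (by omega) hnil, zero_mul, smul_zero, sub_zero]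
  calc t ^ (m - 1) * s
      = t ^ (m - 1) * s + lam • (t ^ (2 * m - 2) * s) := by rw [hvanish, smul_zero, add_zero]
    _ = t ^ (m - 1) * (s + lam • (t ^ (m - 1) * s)) := by
      rw [mul_add, mul_smul_comm, ← mul_assoc, ← pow_add,
        show m - 1 + (m - 1) = 2 * m - 2 by omega]
    _ = t ^ m := by rw [← ht, ← pow_succ, Nat.sub_add_cancel (by omega)]

theorem eq_add_smul_pow_of_eq_add_smul (hm : 2 ≤ m) (ht : t = s + lam • (t ^ (m - 1) * s))
    (hnil : t ^ (m + 1) = 0) : t = s + lam • t ^ m := by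
  rwa [pow_pred_mul_eq_pow_of_eq_add_smul hm ht hnil] at ht

theorem pow_eq_pow_of_eq_add_smul_pow (hm : 2 ≤ m) (ht : t = s + lam • t ^ m)
    (hnil : t ^ (m + 1) = 0) : t ^ m = s ^ m := by
  set u : R := 1 - lam • t ^ (m - 1)
  have hcomm : Commute t u :=
    (Commute.one_right t).sub_right (((Commute.refl t).pow_right _).smul_right lam)
  have hsu : s = t * u := by
    rw [eq_sub_of_add_eq ht.symm, mul_sub, mul_one, mul_smul_comm, ← pow_succ',
      Nat.sub_add_cancel (by omega)]
  have hfix : t ^ m * u = t ^ m := by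
    rw [mul_sub, mul_one, mul_smul_comm, ← pow_add,
      pow_eq_zero_of_le (n := m + (m - 1)) (by omega) hnil, smul_zero, sub_zero]
  have hfix_pow : ∀ k : ℕ, t ^ m * u ^ k = t ^ m := by
    intro k
    induction k with
    | zero => rw [pow_zero, mul_one]
    | succ k ih => rw [pow_succ, ← mul_assoc, ih, hfix]
  rw [hsu, hcomm.mul_pow, hfix_pow]

end NilpotentPerturbation

theorem pow_add_two_eq_zero_of_mul_eq_zero {R : Type*} [Semiring R] {n : ℕ} {x y z w v : R}
    (hzero : (x * y * z) ^ n * (x * y) * w = 0) (hzx : z * x = w * v) :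
    (x * y * z) ^ (n + 2) = 0 :=
  calc (x * y * z) ^ (n + 2) = (x * y * z) ^ n * (x * y) * (z * x) * (y * z) := by
        simp only [pow_succ, mul_assoc]
    _ = 0 := by rw [hzx, ← mul_assoc _ w v, hzero, zero_mul, zero_mul]

namespace HigherTetrahedral

open Arr

variable {K : Type} [Field K] {m : ℕ} {lam : K}

local notation "𝔞" => a K m lam

@[simp]
theorem mkAlgHom_A (θ : Arr) : RingQuot.mkAlgHom K (TetRel K m lam) (A K θ) = 𝔞 θ := rfl

theorem a_rh_mul_a_om : 𝔞 rh * 𝔞 om =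
    𝔞 ep * 𝔞 et + lam • ((𝔞 ep * 𝔞 xi * 𝔞 si) ^ (m - 1) * (𝔞 ep * 𝔞 et)) := by
  simpa using RingQuot.mkAlgHom_rel K (TetRel.rel_rh (m := m) (lam := lam))

theorem a_ga_mul_a_de : 𝔞 ga * 𝔞 de =
    𝔞 be * 𝔞 ep + lam • ((𝔞 be * 𝔞 rh * 𝔞 om) ^ (m - 1) * (𝔞 be * 𝔞 ep)) := by
  simpa using RingQuot.mkAlgHom_rel K (TetRel.rel_ga (m := m) (lam := lam))

theorem a_de_mul_a_et : 𝔞 de * 𝔞 et = 𝔞 nu * 𝔞 om := by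
  simpa using RingQuot.mkAlgHom_rel K (TetRel.rel_de (m := m) (lam := lam))

theorem a_om_mul_a_be : 𝔞 om * 𝔞 be = 𝔞 mu * 𝔞 si := by
  simpa using RingQuot.mkAlgHom_rel K (TetRel.rel_om (m := m) (lam := lam))

theorem a_et_mul_a_ga : 𝔞 et * 𝔞 ga = 𝔞 xi * 𝔞 al := by
  simpa using RingQuot.mkAlgHom_rel K (TetRel.rel_et (m := m) (lam := lam))

theorem a_be_mul_a_rh : 𝔞 be * 𝔞 rh = 𝔞 ga * 𝔞 nu := by
  simpa using RingQuot.mkAlgHom_rel K (TetRel.rel_be (m := m) (lam := lam))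

theorem a_ep_mul_a_xi : 𝔞 ep * 𝔞 xi = 𝔞 rh * 𝔞 mu := by
  simpa using RingQuot.mkAlgHom_rel K (TetRel.rel_ep (m := m) (lam := lam))

theorem cycle_pow_mul_eq_zero (θ : Arr) :
    (𝔞 θ * 𝔞 (f θ) * 𝔞 (f (f θ))) ^ (m - 1) * (𝔞 θ * 𝔞 (f θ)) * 𝔞 (g (f θ)) = 0 := by
  simpa using RingQuot.mkAlgHom_rel K (TetRel.zero_rel (m := m) (lam := lam) θ)

theorem a_ep_mul_a_xi_mul_a_si : 𝔞 ep * 𝔞 xi * 𝔞 si = X K m lam 1 := by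
  rw [a_ep_mul_a_xi, mul_assoc, ← a_om_mul_a_be, ← mul_assoc]
  rfl

theorem a_be_mul_a_rh_mul_a_om : 𝔞 be * 𝔞 rh * 𝔞 om = X K m lam 3 := by
  rw [a_be_mul_a_rh, mul_assoc, ← a_de_mul_a_et, ← mul_assoc]
  rfl

theorem X_one_eq : X K m lam 1 =
    𝔞 ep * 𝔞 et * 𝔞 be + lam • (X K m lam 1 ^ (m - 1) * (𝔞 ep * 𝔞 et * 𝔞 be)) := by
  change 𝔞 rh * 𝔞 om * 𝔞 be = _
  rw [a_rh_mul_a_om, a_ep_mul_a_xi_mul_a_si]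
  simp only [add_mul, smul_mul_assoc, mul_assoc]

theorem X_three_eq : X K m lam 3 =
    𝔞 be * 𝔞 ep * 𝔞 et + lam • (X K m lam 3 ^ (m - 1) * (𝔞 be * 𝔞 ep * 𝔞 et)) := by
  change 𝔞 ga * 𝔞 de * 𝔞 et = _
  rw [a_ga_mul_a_de, a_be_mul_a_rh_mul_a_om]
  simp only [add_mul, smul_mul_assoc, mul_assoc]

theorem X_four_eq : X K m lam 4 =
    𝔞 et * 𝔞 be * 𝔞 ep + lam • (X K m lam 4 ^ (m - 1) * (𝔞 et * 𝔞 be * 𝔞 ep)) := by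
  have hshift : 𝔞 et * X K m lam 3 ^ (m - 1) = X K m lam 4 ^ (m - 1) * 𝔞 et := by
    change _ = (𝔞 et * 𝔞 ga * 𝔞 de) ^ (m - 1) * 𝔞 et
    rw [mul_assoc (𝔞 et), mul_pow_mul]
    rfl
  change 𝔞 et * 𝔞 ga * 𝔞 de = _
  rw [mul_assoc, a_ga_mul_a_de, a_be_mul_a_rh_mul_a_om, mul_add, mul_smul_comm,
    ← mul_assoc (𝔞 et) (X K m lam 3 ^ (m - 1)), hshift]
  simp only [mul_assoc]

theorem X_one_pow_succ (hm : 1 ≤ m) : X K m lam 1 ^ (m + 1) = 0 := by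
  rw [← Nat.sub_add_cancel hm]
  exact pow_add_two_eq_zero_of_mul_eq_zero (cycle_pow_mul_eq_zero rh) a_be_mul_a_rh

theorem X_three_pow_succ (hm : 1 ≤ m) : X K m lam 3 ^ (m + 1) = 0 := by
  rw [← Nat.sub_add_cancel hm]
  exact pow_add_two_eq_zero_of_mul_eq_zero (cycle_pow_mul_eq_zero ga) a_et_mul_a_ga

theorem X_four_pow_succ (hm : 1 ≤ m) : X K m lam 4 ^ (m + 1) = 0 := by
  rw [← Nat.sub_add_cancel hm]
  exact pow_add_two_eq_zero_of_mul_eq_zero (cycle_pow_mul_eq_zero et) a_de_mul_a_et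

end HigherTetrahedral

open HigherTetrahedral Arr in
/-- With `X̃₂ = εηβ`, `X̃₄ = βεη`, `X̃₅ = ηβε` in `Λ(m,λ)`, we have
`X₂ = X̃₂ + λX₂^m`, `X₄ = X̃₄ + λX₄^m`, `X₅ = X̃₅ + λX₅^m`, and consequently
`X₂^m = X̃₂^m`, `X₄^m = X̃₄^m`, `X₅^m = X̃₅^m`. -/
theorem X_tilde (K : Type) [Field K] (m : ℕ) (hm : 2 ≤ m) (lam : K) :
    X K m lam 1 = a K m lam ep * a K m lam et * a K m lam be + lam • (X K m lam 1 ^ m) ∧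
    X K m lam 3 = a K m lam be * a K m lam ep * a K m lam et + lam • (X K m lam 3 ^ m) ∧
    X K m lam 4 = a K m lam et * a K m lam be * a K m lam ep + lam • (X K m lam 4 ^ m) ∧
    X K m lam 1 ^ m = (a K m lam ep * a K m lam et * a K m lam be) ^ m ∧
    X K m lam 3 ^ m = (a K m lam be * a K m lam ep * a K m lam et) ^ m ∧
    X K m lam 4 ^ m = (a K m lam et * a K m lam be * a K m lam ep) ^ m := by
  have hm1 : 1 ≤ m := one_le_two.trans hm
  have h1 : X K m lam 1 = _ :=
    eq_add_smul_pow_of_eq_add_smul hm X_one_eq (X_one_pow_succ hm1)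
  have h3 : X K m lam 3 = _ :=
    eq_add_smul_pow_of_eq_add_smul hm X_three_eq (X_three_pow_succ hm1)
  have h4 : X K m lam 4 = _ :=
    eq_add_smul_pow_of_eq_add_smul hm X_four_eq (X_four_pow_succ hm1)
  exact ⟨h1, h3, h4, pow_eq_pow_of_eq_add_smul_pow hm h1 (X_one_pow_succ hm1),
    pow_eq_pow_of_eq_add_smul_pow hm h3 (X_three_pow_succ hm1),
    pow_eq_pow_of_eq_add_smul_pow hm h4 (X_four_pow_succ hm1)⟩
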